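/- Let m, n ≥ 0 be integers with p = 2m+n ≥ 2, and let G be a finite simple graph with arboricity arb(G) = r such that every (m,n)-colored mixed graph with underlying graph G admits a homomorphism to some (m,n)-colored mixed graph on at most k vertices (k ≥ 2). Then the acyclic chromatic number of G satisfies χ_a(G) ≤ k^{⌈log_p r⌉ + 1}. -/

import Mathlib

/-- The possible kinds of links from a vertex `u` to a vertex `v` in an
`(m,n)`-colored mixed graph: an arc `u → v` of one of `m` colors, an arc
`v → u` of one of `m` colors, or an (unoriented) edge of one of `n` colors. -/
inductive Link (m n : ℕ) : Type where
  | arcOut : Fin m → Link m n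
  | arcIn : Fin m → Link m n
  | edge : Fin n → Link m n

/-- The link as seen from the other endpoint. -/
def Link.flip {m n : ℕ} : Link m n → Link m n
  | .arcOut c => .arcIn c
  | .arcIn c => .arcOut c
  | .edge c => .edge c

/-- An `(m,n)`-colored mixed graph on vertex type `V`: between any two distinct
vertices there is at most one link (a colored arc in either direction or a
colored edge), and there are no loops. -/
structure CMGraph (m n : ℕ) (V : Type) where
  link : V → V → Option (Link m n)
  symm : ∀ u v, link v u = (link u v).map Link.flip
  loopless : ∀ v, link v v = none

/-- The underlying simple graph of an `(m,n)`-colored mixed graph. -/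
def CMGraph.underlying {m n : ℕ} {V : Type} (G : CMGraph m n V) : SimpleGraph V where
  Adj u v := (G.link u v).isSome
  symm := by
    constructor
    intro u v h
    change (G.link u v).isSome = true at h
    change (G.link v u).isSome = true
    rw [G.symm u v]
    rcases hx : G.link u v with _ | l
    · rw [hx] at h; simp at h
    · simp
  loopless := by
    constructor
    intro v h
    change (G.link v v).isSome = true at h
    rw [G.loopless v] at h
    simp at h

/-- A homomorphism of `(m,n)`-colored mixed graphs: arcs map to arcs of the same
color and direction, edges map to edges of the same color. -/
def IsCMHom {m n : ℕ} {V W : Type} (G : CMGraph m n V) (H : CMGraph m n W)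
    (f : V → W) : Prop :=
  ∀ u v l, G.link u v = some l → H.link (f u) (f v) = some l

/-- `G` admits a homomorphism to some `(m,n)`-colored mixed graph on at most `k`
vertices, i.e. `χ_{(m,n)}(G) ≤ k`. -/
def CMChromAtMost {m n : ℕ} {V : Type} (G : CMGraph m n V) (k : ℕ) : Prop :=
  ∃ (W : Type) (inst : Fintype W) (H : CMGraph m n W) (f : V → W),
    @Fintype.card W inst ≤ k ∧ IsCMHom G H f

/-- Every `(m,n)`-colored mixed graph admitting a homomorphism from `G` has at
least `k` vertices, i.e. `χ_{(m,n)}(G) ≥ k`. -/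
def CMChromAtLeast {m n : ℕ} {V : Type} (G : CMGraph m n V) (k : ℕ) : Prop :=
  ∀ (W : Type) (inst : Fintype W) (H : CMGraph m n W) (f : V → W),
    IsCMHom G H f → k ≤ @Fintype.card W inst

/-- The acyclic chromatic number of `G` is at most `k`: there is a proper
`k`-coloring in which the union of any two color classes induces a forest. -/
def AcycChromAtMost {V : Type} (G : SimpleGraph V) (k : ℕ) : Prop :=
  ∃ c : V → Fin k, (∀ u v, G.Adj u v → c u ≠ c v) ∧
    ∀ i j : Fin k, (G.induce {v | c v = i ∨ c v = j}).IsAcyclic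

/-- The edge set of `G` can be decomposed into `r` forests. -/
def ArbAtMost {V : Type} (G : SimpleGraph V) (r : ℕ) : Prop :=
  ∃ F : Fin r → SimpleGraph V,
    (∀ i, F i ≤ G) ∧
    (∀ i, (F i).IsAcyclic) ∧
    (∀ u v, G.Adj u v → ∃ i, (F i).Adj u v) ∧
    (∀ i j, i ≠ j → ∀ u v, ¬ ((F i).Adj u v ∧ (F j).Adj u v))

/-- Every vertex of `G` has degree at most `d`. -/
def MaxDegAtMost {V : Type} (G : SimpleGraph V) (d : ℕ) : Prop :=
  ∀ v, (G.neighborSet v).ncard ≤ d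

/-- `G` is `d`-degenerate: every nonempty (induced) subgraph has a vertex of
degree at most `d` in it. -/
def DegenAtMost {V : Type} (G : SimpleGraph V) (d : ℕ) : Prop :=
  ∀ s : Set V, s.Nonempty → ∃ v ∈ s, (G.neighborSet v ∩ s).ncard ≤ d


/-- The arboricity of `G`: the least `r` such that the edges of `G` decompose into
`r` forests. -/
noncomputable def arboricity {V : Type} (G : SimpleGraph V) : ℕ :=
  sInf {r | ArbAtMost G r}

/-! ### Auxiliary material for the proof -/

lemma Link.flip_flip {m n : ℕ} (l : Link m n) : l.flip.flip = l := by
  cases l <;> rfl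

/-- An explicit injection of `Fin (2*m+n)` into `Link m n`. -/
def linkOfFin (m n : ℕ) (x : Fin (2 * m + n)) : Link m n :=
  if h1 : (x : ℕ) < m then .arcOut ⟨x, h1⟩
  else if h2 : (x : ℕ) < m + m then .arcIn ⟨(x : ℕ) - m, by omega⟩
  else .edge ⟨(x : ℕ) - (m + m), by have := x.2; omega⟩

def linkToNat {m n : ℕ} : Link m n → ℕ
  | .arcOut c => c
  | .arcIn c => m + c
  | .edge c => m + m + c

lemma linkToNat_linkOfFin (m n : ℕ) (x : Fin (2 * m + n)) :
    linkToNat (linkOfFin m n x) = x := by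
  unfold linkOfFin
  split_ifs with h1 h2 <;> simp only [linkToNat] <;> omega

lemma linkOfFin_injective (m n : ℕ) : Function.Injective (linkOfFin m n) := by
  intro x y hxy
  have := linkToNat_linkOfFin m n x
  rw [hxy, linkToNat_linkOfFin] at this
  exact Fin.ext this.symm

/-- A graph whose edge set is contained in a singleton is acyclic. -/
lemma isAcyclic_of_edgeSet_subsingleton {V : Type} {H : SimpleGraph V} (e : Sym2 V)
    (hsub : H.edgeSet ⊆ {e}) : H.IsAcyclic := by
  intro v c hc
  have h3 := hc.three_le_length
  have hnd : c.edges.Nodup := hc.edges_nodup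
  have hlen : c.edges.length = c.length := c.length_edges
  have hmem : ∀ f ∈ c.edges, f = e := fun f hf => hsub (c.edges_subset_edgeSet hf)
  have h0 : c.edges.get ⟨0, by omega⟩ = e := hmem _ (List.get_mem _ ⟨0, by omega⟩)
  have h1 : c.edges.get ⟨1, by omega⟩ = e := hmem _ (List.get_mem _ ⟨1, by omega⟩)
  have := (List.Nodup.get_inj_iff hnd).mp (h0.trans h1.symm)
  simp at this

/-- Every finite graph admits some forest decomposition. -/
lemma exists_arbAtMost {V : Type} [Fintype V] (G : SimpleGraph V) :
    ∃ N, ArbAtMost G N := by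
  classical
  set N := Fintype.card (Sym2 V) with hN
  let e : Fin N ≃ Sym2 V := (Fintype.equivFin (Sym2 V)).symm
  refine ⟨N, fun i => if e i ∈ G.edgeSet then SimpleGraph.fromEdgeSet {e i} else ⊥,
    ?_, ?_, ?_, ?_⟩
  · intro i
    beta_reduce
    by_cases hi : e i ∈ G.edgeSet
    · rw [if_pos hi]
      intro u v huv
      rw [SimpleGraph.fromEdgeSet_adj] at huv
      obtain ⟨hm, -⟩ := huv
      rw [Set.mem_singleton_iff] at hm
      rw [← SimpleGraph.mem_edgeSet, hm]; exact hi
    · rw [if_neg hi]; exact bot_le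
  · intro i
    beta_reduce
    by_cases hi : e i ∈ G.edgeSet
    · rw [if_pos hi]
      refine isAcyclic_of_edgeSet_subsingleton (e i) ?_
      rw [SimpleGraph.edgeSet_fromEdgeSet]
      exact Set.diff_subset
    · rw [if_neg hi]
      refine isAcyclic_of_edgeSet_subsingleton (e i) ?_
      rw [SimpleGraph.edgeSet_bot]
      exact Set.empty_subset _
  · intro u v huv
    refine ⟨e.symm s(u, v), ?_⟩
    beta_reduce
    have he : e (e.symm s(u, v)) = s(u, v) := e.apply_symm_apply _
    rw [he, if_pos ((G.mem_edgeSet).mpr huv)]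
    rw [SimpleGraph.fromEdgeSet_adj]
    exact ⟨rfl, huv.ne⟩
  · intro i j hij u v ⟨hi, hj⟩
    beta_reduce at hi hj
    by_cases hmi : e i ∈ G.edgeSet
    · by_cases hmj : e j ∈ G.edgeSet
      · rw [if_pos hmi, SimpleGraph.fromEdgeSet_adj] at hi
        rw [if_pos hmj, SimpleGraph.fromEdgeSet_adj] at hj
        apply hij
        apply e.injective
        exact (Set.mem_singleton_iff.mp hi.1).symm.trans (Set.mem_singleton_iff.mp hj.1)
      · rw [if_neg hmj] at hj; exact hj
    · rw [if_neg hmi] at hi; exact hi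

/-- If `arb(G) = r` and every `(m,n)`-colored mixed graph with
underlying graph `G` admits a homomorphism to some `(m,n)`-colored mixed graph on at
most `k` vertices (`k ≥ 2`, `p = 2m+n ≥ 2`), then `χ_a(G) ≤ k^(⌈log_p r⌉ + 1)`. -/
theorem acyclic_le_of_arboricity_and_mixed_chromatic (m n k r : ℕ)
    (hp : 2 ≤ 2 * m + n) (hk : 2 ≤ k)
    (V : Type) [Fintype V] (G : SimpleGraph V)
    (harb : arboricity G = r)
    (h : ∀ M : CMGraph m n V, M.underlying = G → CMChromAtMost M k) :
    AcycChromAtMost G (k ^ (⌈Real.logb (2 * m + n : ℝ) (r : ℝ)⌉₊ + 1)) := by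
  classical
  set t := ⌈Real.logb (2 * m + n : ℝ) (r : ℝ)⌉₊ with ht
  have hKpos : 0 < k ^ (t + 1) := Nat.pow_pos (by omega)
  -- a forest decomposition realizing the arboricity
  have hr : ArbAtMost G r := by
    rw [← harb]
    exact Nat.sInf_mem (exists_arbAtMost G)
  obtain ⟨F, hle, hac, hcov, hdisj⟩ := hr
  -- trivial case : r = 0 means G is edgeless
  rcases Nat.eq_zero_or_pos r with hr0 | hrpos
  · subst hr0
    have hGbot : ∀ u v, ¬ G.Adj u v := by
      intro u v hadj
      obtain ⟨i, -⟩ := hcov u v hadj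
      exact i.elim0
    refine ⟨fun _ => ⟨0, hKpos⟩, fun u v hadj _ => hGbot u v hadj, ?_⟩
    intro i j x c hc
    cases c with
    | nil => exact hc.ne_nil rfl
    | cons hadj p => exact hGbot _ _ hadj
  -- main case
  -- `r ≤ (2*m+n) ^ t`
  have hrpt : r ≤ (2 * m + n) ^ t := by
    have hb2 : (2 : ℝ) ≤ 2 * (m : ℝ) + n := by exact_mod_cast hp
    have key : (r : ℝ) ≤ (2 * (m : ℝ) + n) ^ (t : ℕ) := by
      rw [← Real.rpow_natCast]
      calc (r : ℝ) = (2 * (m : ℝ) + n) ^ Real.logb (2 * (m : ℝ) + n) (r : ℝ) :=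
            (Real.rpow_logb (by linarith) (by linarith) (by exact_mod_cast hrpos)).symm
        _ ≤ _ := Real.rpow_le_rpow_of_exponent_le (by linarith) (Nat.le_ceil _)
    have : (r : ℝ) ≤ (((2 * m + n) ^ t : ℕ) : ℝ) := by push_cast; convert key using 2
    exact_mod_cast this
  -- the word assignment : an injective map `Fin r → (Fin (t+1) → Link m n)`
  -- whose words all start with the fixed letter `a`
  have hm0 : m = 0 → 0 < n := by omega
  set a : Link m n := if hm : 0 < m then .arcOut ⟨0, hm⟩ else .edge ⟨0, hm0 (by omega)⟩ with ha
  have hflip_id : a.flip = a → ∀ l : Link m n, l.flip = l := by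
    intro haa l
    rw [ha] at haa
    split_ifs at haa with hm
    · exact absurd haa (by simp [Link.flip])
    · cases l with
      | arcOut c => exact absurd c.2 (by omega)
      | arcIn c => exact absurd c.2 (by omega)
      | edge c => rfl
  set wtail : Fin r → Fin t → Link m n :=
    fun i j => linkOfFin m n ((finFunctionFinEquiv.symm (Fin.castLE hrpt i)) j) with hwt
  set W : Fin r → Fin (t + 1) → Link m n := fun i => Fin.cons a (wtail i) with hW
  have hW0 : ∀ i, W i 0 = a := fun i => rfl
  have hWs : ∀ i j, W i (Fin.succ j) = wtail i j := fun i j => by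
    rw [hW]; exact Fin.cons_succ _ _ _
  have hWinj : ∀ i i', (∀ j, W i j = W i' j) → i = i' := by
    intro i i' hii
    have h1 : wtail i = wtail i' := by
      funext x
      rw [← hWs i x, ← hWs i' x, hii _]
    have h2 : finFunctionFinEquiv.symm (Fin.castLE hrpt i)
        = finFunctionFinEquiv.symm (Fin.castLE hrpt i') := by
      funext x
      exact linkOfFin_injective m n (congrFun h1 x)
    exact Fin.castLE_injective hrpt (finFunctionFinEquiv.symm.injective h2)
  -- orientation of the edges
  set gV : V ≃ Fin (Fintype.card V) := Fintype.equivFin V with hgV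
  -- the forest index of an edge
  have hcov' : ∀ u v, G.Adj u v → ∃! i, (F i).Adj u v := by
    intro u v hadj
    obtain ⟨i, hi⟩ := hcov u v hadj
    refine ⟨i, hi, fun j hj => ?_⟩
    by_contra hne
    exact hdisj j i hne u v ⟨hj, hi⟩
  set fidx : ∀ u v, G.Adj u v → Fin r := fun u v hadj => (hcov' u v hadj).choose with hfi
  have hfidx : ∀ u v (hadj : G.Adj u v), (F (fidx u v hadj)).Adj u v :=
    fun u v hadj => (hcov' u v hadj).choose_spec.1
  have hfidx_uniq : ∀ u v (hadj : G.Adj u v) i, (F i).Adj u v → i = fidx u v hadj :=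
    fun u v hadj i hi => (hcov' u v hadj).choose_spec.2 i hi
  have hfidx_symm : ∀ u v (hadj : G.Adj u v), fidx v u hadj.symm = fidx u v hadj :=
    fun u v hadj => hfidx_uniq u v hadj _ (hfidx v u hadj.symm).symm
  -- the `(m,n)`-colored mixed graphs
  set Mlink : Fin (t + 1) → V → V → Option (Link m n) := fun j u v =>
    if hadj : G.Adj u v then
      some (if gV u < gV v then W (fidx u v hadj) j else (W (fidx u v hadj) j).flip)
    else none with hMl
  have hM_symm : ∀ j u v, Mlink j v u = (Mlink j u v).map Link.flip := by
    intro j u v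
    by_cases hadj : G.Adj u v
    · have hadj' : G.Adj v u := hadj.symm
      have hgne : gV u ≠ gV v := fun hh => hadj.ne (gV.injective hh)
      rw [hMl]
      beta_reduce
      rw [dif_pos hadj, dif_pos hadj', Option.map_some]
      have hfe : fidx v u hadj' = fidx u v hadj := hfidx_symm u v hadj
      rw [hfe]
      rcases lt_or_gt_of_ne hgne with hlt | hlt
      · rw [if_neg (asymm hlt), if_pos hlt]
      · rw [if_pos hlt, if_neg (asymm hlt), Link.flip_flip]
    · have hadj' : ¬ G.Adj v u := fun hh => hadj hh.symm
      rw [hMl]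
      beta_reduce
      rw [dif_neg hadj, dif_neg hadj', Option.map_none]
  set M : Fin (t + 1) → CMGraph m n V := fun j =>
    ⟨Mlink j, hM_symm j, fun v => by rw [hMl]; beta_reduce; rw [dif_neg (G.loopless.irrefl v)]⟩
    with hM
  have hMund : ∀ j, (M j).underlying = G := by
    intro j
    ext u v
    show (Mlink j u v).isSome ↔ G.Adj u v
    by_cases hadj : G.Adj u v
    · rw [hMl]; beta_reduce; rw [dif_pos hadj]; simp [hadj]
    · rw [hMl]; beta_reduce; rw [dif_neg hadj]; simp [hadj]
  have hh : ∀ j : Fin (t + 1), CMChromAtMost (M j) k := fun j => h (M j) (hMund j)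
  choose Wt instW H f hcard hhom using hh
  have hemb : ∀ j, Nonempty (Wt j ↪ Fin k) := by
    intro j
    refine Function.Embedding.nonempty_of_card_le (α := Wt j) (β := Fin k) ?_
    rw [Fintype.card_fin]
    exact hcard j
  have emb : ∀ j, Wt j ↪ Fin k := fun j => (hemb j).some
  set c' : V → Fin (t + 1) → Fin k := fun v j => emb j (f j v) with hc'
  set c : V → Fin (k ^ (t + 1)) := fun v => finFunctionFinEquiv (c' v) with hc
  -- the link recorded in `H j` between images of adjacent vertices
  have hfadj : ∀ (j : Fin (t+1)) u v (hadj : G.Adj u v), (H j).link (f j u) (f j v) =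
      some (if gV u < gV v then W (fidx u v hadj) j else (W (fidx u v hadj) j).flip) := by
    intro j u v hadj
    apply hhom j u v
    show Mlink j u v = _
    rw [hMl]
    beta_reduce
    rw [dif_pos hadj]
  have hfne : ∀ (j : Fin (t+1)) u v, G.Adj u v → f j u ≠ f j v := by
    intro j u v hadj heq
    have h1 := hfadj j u v hadj
    rw [heq, (H j).loopless] at h1
    exact Option.some_ne_none _ h1.symm
  have hproper : ∀ u v, G.Adj u v → c u ≠ c v := by
    intro u v hadj heq
    rw [hc] at heq
    have h2 : c' u = c' v := finFunctionFinEquiv.injective heq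
    exact hfne 0 u v hadj ((emb 0).injective (congrFun h2 0))
  -- Claim A : two adjacent edges whose outer endpoints get the same images
  -- belong to the same forest
  have claimA : ∀ u v w (huv : G.Adj u v) (hvw : G.Adj v w),
      (∀ j, f j u = f j w) → fidx u v huv = fidx v w hvw := by
    intro u v w huv hvw hfw
    have key : ∀ j, (if gV v < gV u then W (fidx v u huv.symm) j
            else (W (fidx v u huv.symm) j).flip)
          = (if gV v < gV w then W (fidx v w hvw) j else (W (fidx v w hvw) j).flip) := by
      intro j
      have h1 := hfadj j v u huv.symm
      have h2 := hfadj j v w hvw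
      rw [hfw j] at h1
      rw [h1] at h2
      exact (Option.some.injEq _ _).mp h2
    rw [← hfidx_symm u v huv]
    set i1 := fidx v u huv.symm
    set i2 := fidx v w hvw
    by_cases b1 : gV v < gV u <;> by_cases b2 : gV v < gV w
    · apply hWinj
      intro j
      have := key j
      rwa [if_pos b1, if_pos b2] at this
    · have hfe : ∀ l : Link m n, l.flip = l := by
        apply hflip_id
        have := key 0
        rw [if_pos b1, if_neg b2, hW0, hW0] at this
        exact this.symm
      apply hWinj
      intro j
      have := key j
      rwa [if_pos b1, if_neg b2, hfe] at this
    · have hfe : ∀ l : Link m n, l.flip = l := by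
        apply hflip_id
        have := key 0
        rw [if_neg b1, if_pos b2, hW0, hW0] at this
        exact this
      apply hWinj
      intro j
      have := key j
      rwa [if_neg b1, if_pos b2, hfe] at this
    · apply hWinj
      intro j
      have := key j
      rw [if_neg b1, if_neg b2] at this
      have := congrArg Link.flip this
      rwa [Link.flip_flip, Link.flip_flip] at this
  -- the coloring works
  refine ⟨c, hproper, ?_⟩
  intro ci cj
  set sset : Set V := {v | c v = ci ∨ c v = cj} with hsset
  intro x cyc hcyc
  -- two-class property
  have htriple : ∀ a' b' d' : ↥sset, G.Adj ↑a' ↑b' → G.Adj ↑b' ↑d' →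
      ∀ j, f j ↑a' = f j ↑d' := by
    intro a' b' d' hab hbd j
    have h1 : c ↑a' ≠ c ↑b' := hproper _ _ hab
    have h2 : c ↑b' ≠ c ↑d' := hproper _ _ hbd
    have ha' := a'.2
    have hb' := b'.2
    have hd' := d'.2
    have hcad : c ↑a' = c ↑d' := by
      rcases ha' with ha' | ha' <;> rcases hd' with hd' | hd'
      · exact ha'.trans hd'.symm
      · rcases hb' with hb' | hb'
        · exact absurd (ha'.trans hb'.symm) h1
        · exact absurd (hb'.trans hd'.symm) h2
      · rcases hb' with hb' | hb'
        · exact absurd (hb'.trans hd'.symm) h2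
        · exact absurd (ha'.trans hb'.symm) h1
      · exact ha'.trans hd'.symm
    have h3 : c' ↑a' = c' ↑d' := finFunctionFinEquiv.injective (by rw [hc] at hcad; exact hcad)
    exact (emb j).injective (congrFun h3 j)
  -- all edges of a nontrivial walk lie in the forest of its first edge
  have hwalk : ∀ (b e : ↥sset) (p : (G.induce sset).Walk b e) (a : ↥sset)
      (hab : (G.induce sset).Adj a b) (hab' : G.Adj ↑a ↑b),
      ∀ x y : ↥sset, s(x, y) ∈ (SimpleGraph.Walk.cons hab p).edges →
        (F (fidx ↑a ↑b hab')).Adj ↑x ↑y := by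
    intro b e p
    induction p with
    | nil =>
      intro a hab hab' x y hxy
      rw [SimpleGraph.Walk.edges_cons, SimpleGraph.Walk.edges_nil,
        List.mem_singleton, Sym2.eq_iff] at hxy
      rcases hxy with ⟨hxa, hyb⟩ | ⟨hxb, hya⟩
      · subst hxa; subst hyb; exact hfidx _ _ hab'
      · subst hxb; subst hya; exact (hfidx _ _ hab').symm
    | @cons b d e hbd q ih =>
      intro a hab hab' x y hxy
      have hbd' : G.Adj ↑b ↑d := hbd
      have heq : fidx ↑a ↑b hab' = fidx ↑b ↑d hbd' :=
        claimA ↑a ↑b ↑d hab' hbd' (htriple a b d hab' hbd')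
      rw [SimpleGraph.Walk.edges_cons, List.mem_cons] at hxy
      rcases hxy with h1 | h1
      · rw [Sym2.eq_iff] at h1
        rcases h1 with ⟨hxa, hyb⟩ | ⟨hxb, hya⟩
        · subst hxa; subst hyb; exact hfidx _ _ hab'
        · subst hxb; subst hya; exact (hfidx _ _ hab').symm
      · rw [heq]
        exact ih b hbd hbd' x y h1
  -- transfer the cycle into a single forest and contradict acyclicity
  cases cyc with
  | nil => exact hcyc.ne_nil rfl
  | @cons _ b _ hab p =>
    have hab' : G.Adj ↑x ↑b := hab
    set i0 := fidx ↑x ↑b hab' with hi0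
    have hedges : ∀ e ∈ (SimpleGraph.Walk.cons hab p).edges,
        e ∈ ((F i0).induce sset).edgeSet := by
      intro e he
      induction e with
      | h x' y' => exact hwalk b x p x hab hab' x' y' he
    have hcyc2 : ((SimpleGraph.Walk.cons hab p).transfer _ hedges).IsCycle :=
      hcyc.transfer hedges
    have hcyc3 : ((((SimpleGraph.Walk.cons hab p).transfer _ hedges)).map
        (SimpleGraph.Embedding.induce sset).toHom).IsCycle := by
      rw [SimpleGraph.Walk.map_isCycle_iff_of_injective]
      · exact hcyc2
      · exact Subtype.val_injective
    exact hac i0 _ hcyc3
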